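/- Pointwise limit of the WZ summand in n: Let a, b be complex numbers with b not a nonpositive integer, and let F(n,k) be as in the WZ-pair for Kummer's theorem (with the same nonvanishing hypotheses). Then for each fixed nonnegative integer k, lim_{n→∞} F(n,k) = 2^b · (b)_k (−1)^k / k!. -/

import Mathlib

open Complex Finset Filter Topology

/-- The Pochhammer symbol `(x)_k = x (x+1) ⋯ (x+k-1)`. -/
noncomputable def poch (x : ℂ) (k : ℕ) : ℂ := (ascPochhammer ℂ k).eval x

/-- The WZ summand for Kummer's theorem:
`F(n,k) = (a+2n)_k (b)_k (-1)^k / ((1+a+2n-b)_k k!) ·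
  Γ(1+a+2n) Γ(1+a/2+n-b) / (Γ(1+a/2+n) Γ(1+a+2n-b))`. -/
noncomputable def kummerF (a b : ℂ) (n k : ℕ) : ℂ :=
  poch (a + 2 * n) k * poch b k * (-1 : ℂ) ^ k /
    (poch (1 + a + 2 * n - b) k * (Nat.factorial k : ℂ)) *
  (Gamma (1 + a + 2 * n) * Gamma (1 + a / 2 + n - b) /
    (Gamma (1 + a / 2 + n) * Gamma (1 + a + 2 * n - b)))

/-- The WZ certificate `C(n,k) = -(b-1)k / ((1+a+2n-b+k)(a+2n))`. -/
noncomputable def kummerC (a b : ℂ) (n k : ℕ) : ℂ :=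
  -((b - 1) * k) / ((1 + a + 2 * n - b + k) * (a + 2 * n))

/-- `G(n,k) = F(n,k) · C(n,k)`. -/
noncomputable def kummerG (a b : ℂ) (n k : ℕ) : ℂ :=
  kummerF a b n k * kummerC a b n k

/-!
The factor `(a+2n)_k / (1+a+2n-b)_k` is a product of `k` ratios `(2n + x) / (2n + y)`, each tending
to `1`. Legendre's duplication formula, applied at `s = (1+a)/2 + n` and `t = (1+a-b)/2 + n`, turns
the Gamma factor into `2^b Γ(c+n) Γ(d+n) / (Γ(c'+n) Γ(d'+n))` with `c + d = c' + d'`, and such a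
ratio tends to `1` by Euler's limit formula `Γ(s+n+1) ~ n^s n!`. Only large `n` matter, and there
no Gamma value vanishes and no Pochhammer factor is zero.
-/

open Bornology
open scoped Nat

lemma poch_eq_prod (x : ℂ) (k : ℕ) : poch x k = ∏ j ∈ range k, (x + j) := by
  induction k with
  | zero => simp [poch]
  | succ k ih => rw [poch, ascPochhammer_succ_eval, ← poch, ih, prod_range_succ]

lemma tendsto_add_div_add_cobounded {𝕜 : Type*} [NormedField 𝕜] (x y : 𝕜) :
    Tendsto (fun z => (z + x) / (z + y)) (cobounded 𝕜) (𝓝 1) := by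
  have hshift := tendsto_add_const_cobounded y
  have hlim : Tendsto (fun z => 1 + (x - y) * (z + y)⁻¹) (cobounded 𝕜) (𝓝 1) := by
    simpa using (tendsto_inv₀_cobounded.comp hshift).const_mul (x - y) |>.const_add 1
  refine hlim.congr' ?_
  filter_upwards [hshift.eventually_ne_cobounded 0] with z hz
  field_simp
  ring

lemma tendsto_poch_add_div_poch_add_cobounded (x y : ℂ) (k : ℕ) :
    Tendsto (fun z => poch (z + x) k / poch (z + y) k) (cobounded ℂ) (𝓝 1) := by
  simp only [poch_eq_prod, ← prod_div_distrib, add_assoc]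
  simpa using
    tendsto_finsetProd (range k) fun j _ => tendsto_add_div_add_cobounded (x + j) (y + j)

lemma eventually_Gamma_add_natCast_ne_zero (z : ℂ) : ∀ᶠ n : ℕ in atTop, Gamma (z + n) ≠ 0 := by
  filter_upwards [tendsto_natCast_atTop_atTop.eventually_gt_atTop (-z.re)] with n hn
  exact Gamma_ne_zero_of_re_pos (by simp; linarith)

lemma tendsto_Gamma_add_div_cpow_mul_factorial {s : ℂ} (hs : Gamma s ≠ 0) :
    Tendsto (fun n : ℕ => Gamma (s + n + 1) / ((n : ℂ) ^ s * n !)) atTop (𝓝 1) := by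
  have hpole : ∀ m : ℕ, s ≠ -m := fun m h => hs ((Gamma_eq_zero_iff s).2 ⟨m, h⟩)
  have hlim := (tendsto_const_nhds (x := Gamma s)).div (GammaSeq_tendsto_Gamma s) hs
  rw [div_self hs] at hlim
  refine hlim.congr fun n => ?_
  have hprod : Gamma (s + n + 1) = Gamma s * ∏ j ∈ range (n + 1), (s + j) := by
    rw [← poch_eq_prod, poch, ← Gamma_add_nat_div_Gamma_eq s hpole, mul_div_cancel₀ _ hs,
      Nat.cast_succ, add_assoc]
  rw [hprod, Pi.div_apply, Complex.GammaSeq, div_div_eq_mul_div]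

lemma tendsto_Gamma_mul_Gamma_div_Gamma_mul_Gamma {c d c' d' : ℂ} (h : c + d = c' + d') :
    Tendsto (fun n : ℕ => Gamma (c + n) * Gamma (d + n) / (Gamma (c' + n) * Gamma (d' + n)))
      atTop (𝓝 1) := by
  obtain ⟨N, hc, hd, hc', hd'⟩ := ((eventually_Gamma_add_natCast_ne_zero c).and <|
    (eventually_Gamma_add_natCast_ne_zero d).and <| (eventually_Gamma_add_natCast_ne_zero c').and
    (eventually_Gamma_add_natCast_ne_zero d')).exists
  have hlim := ((tendsto_Gamma_add_div_cpow_mul_factorial hc).mul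
    (tendsto_Gamma_add_div_cpow_mul_factorial hd)).div
    ((tendsto_Gamma_add_div_cpow_mul_factorial hc').mul
    (tendsto_Gamma_add_div_cpow_mul_factorial hd')) (by norm_num)
  rw [mul_one, div_one] at hlim
  rw [← tendsto_add_atTop_iff_nat (N + 1)]
  refine hlim.congr' ?_
  filter_upwards [eventually_ne_atTop 0] with n hn
  have hn' : (n : ℂ) ≠ 0 := Nat.cast_ne_zero.2 hn
  have hpow : (n : ℂ) ^ (c + N) * n ! * ((n : ℂ) ^ (d + N) * n !) =
      (n : ℂ) ^ (c' + N) * n ! * ((n : ℂ) ^ (d' + N) * n !) := by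
    rw [mul_mul_mul_comm, ← cpow_add _ _ hn', mul_mul_mul_comm (_ ^ _), ← cpow_add _ _ hn',
      show c + N + (d + N) = c' + N + (d' + N) by linear_combination h]
  have hpow0 : (n : ℂ) ^ (c' + N) * n ! * ((n : ℂ) ^ (d' + N) * n !) ≠ 0 := by
    simp [hn', n.factorial_ne_zero]
  rw [Pi.div_apply, div_mul_div_comm, div_mul_div_comm, hpow, div_div_div_cancel_right₀ hpow0]
  push_cast
  ring_nf

lemma Gamma_two_mul_div_Gamma_two_mul (s t : ℂ) :
    Gamma (2 * s) / Gamma (2 * t) =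
      (2 : ℂ) ^ (2 * (s - t)) * (Gamma s * Gamma (s + 1 / 2) / (Gamma t * Gamma (t + 1 / 2))) := by
  rw [Gamma_mul_Gamma_add_half, Gamma_mul_Gamma_add_half,
    show 2 * (s - t) = (1 - 2 * t) + -(1 - 2 * s) by ring, cpow_add _ _ two_ne_zero, cpow_neg]
  have h2s : (2 : ℂ) ^ (1 - 2 * s) ≠ 0 := cpow_ne_zero_iff.2 (Or.inl two_ne_zero)
  have h2t : (2 : ℂ) ^ (1 - 2 * t) ≠ 0 := cpow_ne_zero_iff.2 (Or.inl two_ne_zero)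
  have hpi : (√Real.pi : ℂ) ≠ 0 := ofReal_ne_zero.2 (Real.sqrt_pos.2 Real.pi_pos).ne'
  field_simp

lemma tendsto_kummer_Gamma_factor (a b : ℂ) :
    Tendsto (fun n : ℕ => Gamma (1 + a + 2 * n) * Gamma (1 + a / 2 + n - b) /
      (Gamma (1 + a / 2 + n) * Gamma (1 + a + 2 * n - b))) atTop (𝓝 ((2 : ℂ) ^ b)) := by
  have hlim := (tendsto_Gamma_mul_Gamma_div_Gamma_mul_Gamma (c := (1 + a) / 2)
    (d := 1 + a / 2 - b) (c' := (1 + a - b) / 2) (d' := 1 + (a - b) / 2) (by ring)).const_mul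
    ((2 : ℂ) ^ b)
  rw [mul_one] at hlim
  refine hlim.congr' ?_
  filter_upwards [eventually_Gamma_add_natCast_ne_zero (1 + a / 2)] with n hn
  have hdup := Gamma_two_mul_div_Gamma_two_mul ((1 + a) / 2 + n) ((1 + a - b) / 2 + n)
  rw [show 2 * ((1 + a) / 2 + (n : ℂ)) = 1 + a + 2 * n by ring,
    show 2 * ((1 + a - b) / 2 + (n : ℂ)) = 1 + a + 2 * n - b by ring,
    show 2 * ((1 + a) / 2 + (n : ℂ) - ((1 + a - b) / 2 + n)) = b by ring,
    show (1 + a) / 2 + (n : ℂ) + 1 / 2 = 1 + a / 2 + n by ring,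
    show (1 + a - b) / 2 + (n : ℂ) + 1 / 2 = 1 + (a - b) / 2 + n by ring] at hdup
  rw [show 1 + a / 2 + (n : ℂ) - b = 1 + a / 2 - b + n by ring, mul_comm (Gamma (1 + a / 2 + n)),
    mul_div_mul_comm (Gamma (1 + a + 2 * n)), hdup, mul_div_mul_comm _ (Gamma (1 + a / 2 + n)),
    mul_assoc, mul_assoc, div_mul_div_cancel₀' hn, mul_div_mul_comm]

theorem kummer_WZ_summand_limit (a b : ℂ) :
    ∀ k : ℕ,
      Tendsto (fun n : ℕ => kummerF a b n k) atTop
        (𝓝 ((2 : ℂ) ^ b * poch b k * (-1 : ℂ) ^ k / (Nat.factorial k : ℂ))) := by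
  intro k
  have hpoch :
      Tendsto (fun n : ℕ => poch (a + 2 * n) k / poch (1 + a + 2 * n - b) k) atTop (𝓝 1) := by
    refine ((tendsto_poch_add_div_poch_add_cobounded a (1 + a - b) k).comp
      ((tendsto_mul_left_cobounded two_ne_zero).comp tendsto_natCast_atTop_cobounded)).congr
      fun n => ?_
    simp only [Function.comp_apply]
    congr 2 <;> ring
  have hlim := (hpoch.mul_const (poch b k * (-1) ^ k / k !)).mul (tendsto_kummer_Gamma_factor a b)
  convert hlim using 2
  · unfold kummerF
    ring
  · ring
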